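/- arXiv:1411.2342 — 8 statements merged into one kernel-verified Lean document; each statement's English description precedes it below -/
import Mathlib

section
/- For every state vector w ∈ ℝ^{3n}, every choice of densities ρ₁,…,ρₙ > 0, and every θ ∈ ℝ, the rotation matrix P(θ) satisfies P(θ)⁻¹ = P(θ)ᵀ and the rotational-invariance identity cos(θ)·A_x(w,γ) + sin(θ)·A_y(w,γ) = P(θ)⁻¹ · A_x(P(θ)w, γ) · P(θ). -/
/-! `P(θ)` rotates the velocity pair `(u, v)` and fixes `h`, so `P(θ) P(φ) = P(θ + φ)` and
`P(θ)ᵀ = P(-θ) = P(θ)⁻¹`. In `A_x(P(θ) w)` the velocity enters only through the diagonal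
`cos θ • u + sin θ • v`, which commutes with the scalar blocks of `P(θ)` and so survives the
conjugation unchanged; the coupling blocks `H` and `Γ` of `A_x`, conjugated by `P(θ)`, are spread
over the second and third block row/column with weights `cos θ` and `sin θ`, which is exactly
`cos θ • A_x + sin θ • A_y`. -/

open Matrix

namespace MLSW0

noncomputable def alpha (n : ℕ) (ρ : Fin n → ℝ) (i k : Fin n) : ℝ :=
  if k < i then ρ k / ρ i else 1

noncomputable def Gam (n : ℕ) (ρ : Fin n → ℝ) : Matrix (Fin n) (Fin n) ℝ :=
  Matrix.of (alpha n ρ)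

/-- A 3×3 block matrix with n×n blocks, rows `[[A,B,C],[D,E,F],[G,H,K]]`. -/
def blk3 {n : ℕ} (A B C D E F G H K : Matrix (Fin n) (Fin n) ℝ) :
    Matrix (Fin n ⊕ Fin n ⊕ Fin n) (Fin n ⊕ Fin n ⊕ Fin n) ℝ :=
  Matrix.fromBlocks A (Matrix.fromCols B C) (Matrix.fromRows D G)
    (Matrix.fromBlocks E F H K)

/-- The matrix `A_x(w,γ)` of the multi-layer shallow water model, where the state
vector `w = (h, u, v)` is indexed by `Fin n ⊕ Fin n ⊕ Fin n`. -/
noncomputable def Ax (n : ℕ) (ρ : Fin n → ℝ) (w : Fin n ⊕ Fin n ⊕ Fin n → ℝ) :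
    Matrix (Fin n ⊕ Fin n ⊕ Fin n) (Fin n ⊕ Fin n ⊕ Fin n) ℝ :=
  blk3 (Matrix.diagonal fun i => w (Sum.inr (Sum.inl i)))
    (Matrix.diagonal fun i => w (Sum.inl i)) 0
    (Gam n ρ) (Matrix.diagonal fun i => w (Sum.inr (Sum.inl i))) 0
    0 0 (Matrix.diagonal fun i => w (Sum.inr (Sum.inl i)))

/-- The matrix `A_y(w,γ)` of the multi-layer shallow water model. -/
noncomputable def Ay (n : ℕ) (ρ : Fin n → ℝ) (w : Fin n ⊕ Fin n ⊕ Fin n → ℝ) :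
    Matrix (Fin n ⊕ Fin n ⊕ Fin n) (Fin n ⊕ Fin n ⊕ Fin n) ℝ :=
  blk3 (Matrix.diagonal fun i => w (Sum.inr (Sum.inr i))) 0
    (Matrix.diagonal fun i => w (Sum.inl i))
    0 (Matrix.diagonal fun i => w (Sum.inr (Sum.inr i))) 0
    (Gam n ρ) 0 (Matrix.diagonal fun i => w (Sum.inr (Sum.inr i)))

/-- The 3n×3n rotation matrix `P(θ)`. -/
noncomputable def Pmat (n : ℕ) (θ : ℝ) :
    Matrix (Fin n ⊕ Fin n ⊕ Fin n) (Fin n ⊕ Fin n ⊕ Fin n) ℝ :=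
  blk3 1 0 0
    0 (Real.cos θ • 1) (Real.sin θ • 1)
    0 (-(Real.sin θ) • 1) (Real.cos θ • 1)

section

variable {n : ℕ}

theorem blk3_mul (A B C D E F G H K A' B' C' D' E' F' G' H' K' : Matrix (Fin n) (Fin n) ℝ) :
    blk3 A B C D E F G H K * blk3 A' B' C' D' E' F' G' H' K' =
      blk3 (A * A' + B * D' + C * G') (A * B' + B * E' + C * H') (A * C' + B * F' + C * K')
        (D * A' + E * D' + F * G') (D * B' + E * E' + F * H') (D * C' + E * F' + F * K')
        (G * A' + H * D' + K * G') (G * B' + H * E' + K * H') (G * C' + H * F' + K * K') := by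
  ext (i | i | i) (j | j | j) <;>
    simp [blk3, mul_apply, Fintype.sum_sum_type, add_assoc]

theorem blk3_transpose (A B C D E F G H K : Matrix (Fin n) (Fin n) ℝ) :
    (blk3 A B C D E F G H K)ᵀ = blk3 Aᵀ Dᵀ Gᵀ Bᵀ Eᵀ Hᵀ Cᵀ Fᵀ Kᵀ := by
  simp only [blk3, fromBlocks_transpose, transpose_fromCols, transpose_fromRows]

theorem blk3_add (A B C D E F G H K A' B' C' D' E' F' G' H' K' : Matrix (Fin n) (Fin n) ℝ) :
    blk3 A B C D E F G H K + blk3 A' B' C' D' E' F' G' H' K' =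
      blk3 (A + A') (B + B') (C + C') (D + D') (E + E') (F + F') (G + G') (H + H') (K + K') := by
  ext (i | i | i) (j | j | j) <;> rfl

theorem smul_blk3 (c : ℝ) (A B C D E F G H K : Matrix (Fin n) (Fin n) ℝ) :
    c • blk3 A B C D E F G H K = blk3 (c • A) (c • B) (c • C) (c • D) (c • E) (c • F)
      (c • G) (c • H) (c • K) := by
  ext (i | i | i) (j | j | j) <;> rfl

theorem blk3_one : blk3 (1 : Matrix (Fin n) (Fin n) ℝ) 0 0 0 1 0 0 0 1 = 1 := by
  simp only [blk3, fromCols_zero, fromRows_zero, fromBlocks_one]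

open Real

theorem Pmat_transpose (θ : ℝ) : (Pmat n θ)ᵀ = Pmat n (-θ) := by
  simp only [Pmat, blk3_transpose, transpose_zero, transpose_one, transpose_smul, cos_neg, sin_neg,
    neg_neg]

theorem Pmat_mul_Pmat (θ φ : ℝ) : Pmat n θ * Pmat n φ = Pmat n (θ + φ) := by
  rw [Pmat, Pmat, Pmat, blk3_mul, cos_add, sin_add]
  congr 1 <;> simp only [Matrix.mul_smul, mul_one, mul_zero, zero_mul, add_zero, zero_add] <;>
    module

theorem Pmat_zero : Pmat n 0 = 1 := by
  rw [Pmat, cos_zero, sin_zero, one_smul, zero_smul, neg_zero, zero_smul, blk3_one]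

theorem Pmat_mul_transpose (θ : ℝ) : Pmat n θ * (Pmat n θ)ᵀ = 1 := by
  rw [Pmat_transpose, Pmat_mul_Pmat, add_neg_cancel, Pmat_zero]

theorem Pmat_inv (θ : ℝ) : (Pmat n θ)⁻¹ = (Pmat n θ)ᵀ :=
  inv_eq_right_inv (Pmat_mul_transpose θ)

theorem Pmat_mulVec_inl (θ : ℝ) (w : Fin n ⊕ Fin n ⊕ Fin n → ℝ) (i : Fin n) :
    (Pmat n θ *ᵥ w) (Sum.inl i) = w (Sum.inl i) := by
  simp [Pmat, blk3, mulVec, dotProduct, Fintype.sum_sum_type, one_apply]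

theorem Pmat_mulVec_inr_inl (θ : ℝ) (w : Fin n ⊕ Fin n ⊕ Fin n → ℝ) (i : Fin n) :
    (Pmat n θ *ᵥ w) (Sum.inr (Sum.inl i)) =
      cos θ * w (Sum.inr (Sum.inl i)) + sin θ * w (Sum.inr (Sum.inr i)) := by
  simp [Pmat, blk3, mulVec, dotProduct, Fintype.sum_sum_type, one_apply]

theorem Ax_Pmat_mulVec (ρ : Fin n → ℝ) (θ : ℝ) (w : Fin n ⊕ Fin n ⊕ Fin n → ℝ) :
    Ax n ρ (Pmat n θ *ᵥ w) =
      blk3 (cos θ • diagonal (fun i => w (Sum.inr (Sum.inl i))) +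
          sin θ • diagonal (fun i => w (Sum.inr (Sum.inr i))))
        (diagonal fun i => w (Sum.inl i)) 0
        (Gam n ρ) (cos θ • diagonal (fun i => w (Sum.inr (Sum.inl i))) +
          sin θ • diagonal (fun i => w (Sum.inr (Sum.inr i)))) 0
        0 0 (cos θ • diagonal (fun i => w (Sum.inr (Sum.inl i))) +
          sin θ • diagonal (fun i => w (Sum.inr (Sum.inr i)))) := by
  simp only [Ax, Pmat_mulVec_inl, Pmat_mulVec_inr_inl, ← diagonal_smul, ← diagonal_add]
  rfl

theorem transpose_Pmat_mul_Ax_mul_Pmat (ρ : Fin n → ℝ) (θ : ℝ) (w : Fin n ⊕ Fin n ⊕ Fin n → ℝ) :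
    (Pmat n θ)ᵀ * Ax n ρ (Pmat n θ *ᵥ w) * Pmat n θ = cos θ • Ax n ρ w + sin θ • Ay n ρ w := by
  rw [Pmat_transpose, Ax_Pmat_mulVec, Pmat, Pmat, cos_neg, sin_neg, neg_neg, blk3_mul, blk3_mul,
    Ax, Ay, smul_blk3, smul_blk3, blk3_add]
  generalize cos θ • diagonal (fun i => w (Sum.inr (Sum.inl i))) +
    sin θ • diagonal (fun i => w (Sum.inr (Sum.inr i))) = U
  congr 1 <;> simp only [Matrix.smul_mul, Matrix.mul_smul, one_mul, mul_one, zero_mul, mul_zero,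
    add_zero, zero_add, smul_zero]
  all_goals first
    | module
    | linear_combination (norm := module) cos_sq_add_sin_sq θ • U

end

theorem stmt0_general (n : ℕ) (ρ : Fin n → ℝ)
    (w : Fin n ⊕ Fin n ⊕ Fin n → ℝ) (θ : ℝ) :
    (Pmat n θ)⁻¹ = (Pmat n θ)ᵀ ∧
    Real.cos θ • Ax n ρ w + Real.sin θ • Ay n ρ w =
      (Pmat n θ)⁻¹ * Ax n ρ ((Pmat n θ).mulVec w) * Pmat n θ := by
  rw [Pmat_inv]
  exact ⟨rfl, (transpose_Pmat_mul_Ax_mul_Pmat ρ θ w).symm⟩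

/-- Rotational invariance of the multi-layer shallow water model:
`P(θ)⁻¹ = P(θ)ᵀ` and `cos θ • A_x(w,γ) + sin θ • A_y(w,γ) = P(θ)⁻¹ A_x(P(θ)w, γ) P(θ)`. -/
theorem stmt0 (n : ℕ) (hn : 2 ≤ n) (ρ : Fin n → ℝ) (hρ : ∀ i, 0 < ρ i)
    (w : Fin n ⊕ Fin n ⊕ Fin n → ℝ) (θ : ℝ) :
    (Pmat n θ)⁻¹ = (Pmat n θ)ᵀ ∧
    Real.cos θ • Ax n ρ w + Real.sin θ • Ay n ρ w =
      (Pmat n θ)⁻¹ * Ax n ρ ((Pmat n θ).mulVec w) * Pmat n θ :=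
  stmt0_general n ρ w θ

end MLSW0
end

section
/- Let h ∈ ℝⁿ and densities ρ₁,…,ρₙ > 0. The symmetric 3n×3n block-diagonal matrix S⁰_x(h,γ) := diag(ΔΓ, ΔH, ΔH) is positive definite if and only if hᵢ > 0 for all i ∈ {1,…,n} and 0 < γᵢ < 1 for all i ∈ {1,…,n−1}. -/
open Matrix

namespace MLSW2

noncomputable def alpha (n : ℕ) (ρ : Fin n → ℝ) (i k : Fin n) : ℝ :=
  if k < i then ρ k / ρ i else 1

noncomputable def Gam (n : ℕ) (ρ : Fin n → ℝ) : Matrix (Fin n) (Fin n) ℝ :=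
  Matrix.of (alpha n ρ)

noncomputable def alphaN (n : ℕ) (ρ : Fin n → ℝ) (i : Fin n) : ℝ :=
  if h : n - 1 < n then alpha n ρ ⟨n - 1, h⟩ i else 1

noncomputable def Delta (n : ℕ) (ρ : Fin n → ℝ) : Matrix (Fin n) (Fin n) ℝ :=
  Matrix.diagonal (alphaN n ρ)

/-- The density ratio `γᵢ = ρᵢ/ρᵢ₊₁`. -/
noncomputable def gam (n : ℕ) (ρ : Fin n → ℝ) (i : Fin (n - 1)) : ℝ :=
  ρ ⟨i.val, by have := i.isLt; omega⟩ / ρ ⟨i.val + 1, by have := i.isLt; omega⟩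

/-- A 3×3 block matrix with n×n blocks, rows `[[A,B,C],[D,E,F],[G,H,K]]`. -/
def blk3 {n : ℕ} (A B C D E F G H K : Matrix (Fin n) (Fin n) ℝ) :
    Matrix (Fin n ⊕ Fin n ⊕ Fin n) (Fin n ⊕ Fin n ⊕ Fin n) ℝ :=
  Matrix.fromBlocks A (Matrix.fromCols B C) (Matrix.fromRows D G)
    (Matrix.fromBlocks E F H K)

/-- `S⁰_x(h,γ) = diag(ΔΓ, ΔH, ΔH)`. -/
noncomputable def S0 (n : ℕ) (ρ : Fin n → ℝ) (h : Fin n → ℝ) :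
    Matrix (Fin n ⊕ Fin n ⊕ Fin n) (Fin n ⊕ Fin n ⊕ Fin n) ℝ :=
  blk3 (Delta n ρ * Gam n ρ) 0 0
    0 (Delta n ρ * Matrix.diagonal h) 0
    0 0 (Delta n ρ * Matrix.diagonal h)

/-! With `σₖ = ρₖ/ρₙ` one has `(ΔΓ)ᵢⱼ = σ_{min(i,j)}`, and such a min matrix factors as `L D Lᵀ`
with `L` the lower-triangular all-ones matrix and `D` the diagonal of the increments
`σ₁, σ₂ - σ₁, …`. As `det L = 1`, `ΔΓ` is positive definite iff every increment is positive,
i.e. iff `ρ` is strictly increasing, i.e. iff every `γᵢ < 1`. The other two blocks are diagonal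
with entries `α_{n,i} hᵢ`, where `α_{n,i} > 0`. -/

open Finset

def lowerOnes (ι : Type*) [LinearOrder ι] : Matrix ι ι ℝ :=
  of fun i k => if k ≤ i then 1 else 0

section LowerOnes

variable {ι : Type*} [Fintype ι] [LinearOrder ι]

theorem det_lowerOnes : (lowerOnes ι).det = 1 := by
  rw [det_of_isLowerTriangular (lowerOnes ι) fun i k hki => if_neg (not_le.mpr hki)]
  simp [lowerOnes]

theorem lowerOnes_mul_diagonal_mul_transpose [LocallyFiniteOrderBot ι] (d : ι → ℝ) :
    lowerOnes ι * diagonal d * (lowerOnes ι)ᵀ = of fun i j => ∑ k ∈ Iic (min i j), d k := by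
  ext i j
  rw [mul_apply, of_apply, ← filter_ge_eq_Iic, sum_filter]
  refine sum_congr rfl fun k _ => ?_
  rw [mul_diagonal, transpose_apply]
  by_cases hi : k ≤ i <;> by_cases hj : k ≤ j <;> simp [lowerOnes, hi, hj]

theorem posDef_of_sum_Iic_min_iff [LocallyFiniteOrderBot ι] (d : ι → ℝ) :
    (of fun i j => ∑ k ∈ Iic (min i j), d k).PosDef ↔ ∀ k, 0 < d k := by
  have hL : IsUnit (lowerOnes ι) := by
    rw [isUnit_iff_isUnit_det, det_lowerOnes]; exact isUnit_one
  rw [← lowerOnes_mul_diagonal_mul_transpose, ← conjTranspose_eq_transpose_of_trivial,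
    ← star_eq_conjTranspose, hL.posDef_star_right_conjugate_iff, posDef_diagonal_iff]

end LowerOnes

def increments {m : ℕ} (σ : Fin (m + 1) → ℝ) : Fin (m + 1) → ℝ :=
  Fin.cases (σ 0) fun k => σ k.succ - σ k.castSucc

theorem sum_Iic_increments {m : ℕ} (σ : Fin (m + 1) → ℝ) (i : Fin (m + 1)) :
    ∑ k ∈ Iic i, increments σ k = σ i := by
  induction i using Fin.induction with
  | zero =>
    rw [show Iic (0 : Fin (m + 1)) = {0} from Iic_bot, sum_singleton, increments, Fin.cases_zero]
  | succ i ih =>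
    have hIic : Iic i.succ = insert i.succ (Iic i.castSucc) := by
      ext k
      simp only [mem_Iic, mem_insert, Fin.le_iff_val_le_val, Fin.ext_iff, Fin.val_succ,
        Fin.val_castSucc]
      omega
    rw [hIic, sum_insert (by simp [Fin.le_iff_val_le_val]), ih, increments, Fin.cases_succ,
      sub_add_cancel]

theorem posDef_of_min_iff {m : ℕ} (σ : Fin (m + 1) → ℝ) :
    (of fun i j => σ (min i j)).PosDef ↔ 0 < σ 0 ∧ StrictMono σ := by
  simp_rw [← sum_Iic_increments σ (min _ _), posDef_of_sum_Iic_min_iff, Fin.forall_fin_succ,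
    increments, Fin.cases_zero, Fin.cases_succ, sub_pos, Fin.strictMono_iff_lt_succ]

theorem posDef_fromBlocks_zero_zero_iff {m l : Type*} [Fintype m] [Fintype l]
    {A : Matrix m m ℝ} {D : Matrix l l ℝ} :
    (fromBlocks A 0 0 D).PosDef ↔ A.PosDef ∧ D.PosDef := by
  refine ⟨fun h => ⟨?_, ?_⟩, fun ⟨hA, hD⟩ => ?_⟩
  · exact h.submatrix Sum.inl_injective
  · exact h.submatrix Sum.inr_injective
  · refine .of_dotProduct_mulVec_pos (hA.1.fromBlocks conjTranspose_zero hD.1) fun x hx => ?_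
    rw [← Sum.elim_comp_inl_inr x] at hx ⊢
    simp only [fromBlocks_mulVec, zero_mulVec, add_zero, zero_add, Function.star_sumElim,
      sumElim_dotProduct_sumElim, Sum.elim_comp_inl, Sum.elim_comp_inr]
    have hA0 := hA.posSemidef.dotProduct_mulVec_nonneg (x ∘ Sum.inl)
    have hD0 := hD.posSemidef.dotProduct_mulVec_nonneg (x ∘ Sum.inr)
    by_cases hl : x ∘ Sum.inl = 0
    · have hr : x ∘ Sum.inr ≠ 0 := fun hr => hx (by rw [hl, hr]; exact Sum.elim_zero_zero)
      linarith [hD.dotProduct_mulVec_pos hr]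
    · linarith [hA.dotProduct_mulVec_pos hl]

theorem alpha_eq_div {n : ℕ} {ρ : Fin n → ℝ} (hρ : ∀ i, 0 < ρ i) (i k : Fin n) :
    alpha n ρ i k = ρ (min i k) / ρ i := by
  rcases lt_or_ge k i with hki | hik
  · rw [alpha, if_pos hki, min_eq_right hki.le]
  · rw [alpha, if_neg hik.not_gt, min_eq_left hik, div_self (hρ i).ne']

theorem alphaN_eq_div {m : ℕ} {ρ : Fin (m + 1) → ℝ} (hρ : ∀ i, 0 < ρ i) (i : Fin (m + 1)) :
    alphaN (m + 1) ρ i = ρ i / ρ (Fin.last m) := by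
  rw [alphaN, dif_pos (by omega), alpha_eq_div hρ]
  show ρ (min (Fin.last m) i) / ρ (Fin.last m) = _
  rw [min_eq_right (Fin.le_last i)]

theorem delta_mul_gam {m : ℕ} {ρ : Fin (m + 1) → ℝ} (hρ : ∀ i, 0 < ρ i) :
    Delta (m + 1) ρ * Gam (m + 1) ρ = of fun i j => ρ (min i j) / ρ (Fin.last m) := by
  ext i j
  rw [Delta, Gam, diagonal_mul, of_apply, of_apply, alphaN_eq_div hρ, alpha_eq_div hρ,
    mul_comm, div_mul_div_cancel₀ (hρ i).ne']

theorem gam_mem_Ioo_iff {m : ℕ} {ρ : Fin (m + 1) → ℝ} (hρ : ∀ i, 0 < ρ i) (i : Fin m) :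
    (0 < gam (m + 1) ρ i ∧ gam (m + 1) ρ i < 1) ↔ ρ i.castSucc < ρ i.succ :=
  (and_iff_right (div_pos (hρ _) (hρ _))).trans (div_lt_one (hρ _))

theorem S0_eq_fromBlocks (n : ℕ) (ρ h : Fin n → ℝ) :
    S0 n ρ h = fromBlocks (Delta n ρ * Gam n ρ) 0 0
      (fromBlocks (Delta n ρ * diagonal h) 0 0 (Delta n ρ * diagonal h)) := by
  rw [S0, blk3, fromCols_zero, fromRows_zero]

/-- `S⁰_x(h,γ)` is positive definite iff all heights are positive and `0 < γᵢ < 1`. -/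
theorem stmt2 (n : ℕ) (hn : 2 ≤ n) (ρ : Fin n → ℝ) (hρ : ∀ i, 0 < ρ i)
    (h : Fin n → ℝ) :
    (S0 n ρ h).PosDef ↔
      ((∀ i, 0 < h i) ∧ ∀ i : Fin (n - 1), 0 < gam n ρ i ∧ gam n ρ i < 1) := by
  obtain ⟨m, rfl⟩ : ∃ m, n = m + 1 := ⟨n - 1, by omega⟩
  have hlast := hρ (Fin.last m)
  have hα (i) : 0 < alphaN (m + 1) ρ i := by
    rw [alphaN_eq_div hρ]
    exact div_pos (hρ i) hlast
  have hσ : StrictMono (fun k => ρ k / ρ (Fin.last m)) ↔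
      ∀ i : Fin (m + 1 - 1), 0 < gam (m + 1) ρ i ∧ gam (m + 1) ρ i < 1 := by
    simp only [Fin.strictMono_iff_lt_succ, div_lt_div_iff_of_pos_right hlast, gam_mem_Ioo_iff hρ]
    -- `Fin (m + 1 - 1)` and `Fin m` agree by computation
    rfl
  rw [S0_eq_fromBlocks, posDef_fromBlocks_zero_zero_iff, posDef_fromBlocks_zero_zero_iff, and_self,
    delta_mul_gam hρ, posDef_of_min_iff fun k => ρ k / ρ (Fin.last m), hσ, Delta,
    diagonal_mul_diagonal, posDef_diagonal_iff]
  simp only [div_pos (hρ 0) hlast, true_and, mul_pos_iff_of_pos_left (hα _)]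
  exact and_comm

end MLSW2
end

section
/- Let 0 < a₁ < a₂ < … < aₙ be real numbers and set p_k := 1/(a_{k+1} − a_k) for 1 ≤ k ≤ n−1. Then the min-matrix M := (a_{min(i,j)})_{1≤i,j≤n} is invertible and its inverse is the symmetric tridiagonal matrix T with diagonal entries T_{1,1} = (a₂/a₁)p₁, T_{k,k} = p_{k−1} + p_k for 2 ≤ k ≤ n−1, T_{n,n} = p_{n−1}, off-diagonal entries T_{k,k+1} = T_{k+1,k} = −p_k for 1 ≤ k ≤ n−1, and all other entries zero. -/
/-!
Fix a row `i` of `M` and write `f k := a_{min(i,k)}`. Its increments are `a_{k+1} - a_k` for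
`k < i` and `0` otherwise, so `p_k (f (k+1) - f k) = [k < i]`. As `T` is tridiagonal, for `j > 1`
the entry `(M T)_{ij}` regroups (with `p_n := 0`) as
`p_{j-1} (f j - f (j-1)) - p_j (f (j+1) - f j) = [j-1 < i] - [j < i] = [i = j]`.
The first column works the same way once `T₁₁` is written as `1/a₁ + p₁`,
because `f 1 = a₁`.
-/

open Matrix

namespace MLSW5

/-- `p_k := 1/(a_{k+1} − a_k)` (0-indexed: `p k = 1/(a (k+1) - a k)`). -/
noncomputable def pfun (n : ℕ) (a : Fin n → ℝ) (k : ℕ) : ℝ :=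
  if h : k + 1 < n then 1 / (a ⟨k + 1, h⟩ - a ⟨k, by omega⟩) else 0

/-- The min-matrix `M_{i,j} = a_{min(i,j)}`. -/
noncomputable def minMat (n : ℕ) (a : Fin n → ℝ) : Matrix (Fin n) (Fin n) ℝ :=
  Matrix.of fun i j => a (min i j)

/-- The symmetric tridiagonal matrix `T`: diagonal entries
`T₁₁ = (a₂/a₁)p₁`, `T_{k,k} = p_{k−1} + p_k` (middle), `T_{n,n} = p_{n−1}`,
off-diagonal `T_{k,k+1} = T_{k+1,k} = −p_k`, and all other entries zero. -/
noncomputable def Tmat (n : ℕ) (a : Fin n → ℝ) : Matrix (Fin n) (Fin n) ℝ :=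
  Matrix.of fun i j =>
    if i.val = j.val then
      (if i.val = 0 then
        (if h1 : 1 < n then a ⟨1, h1⟩ / a ⟨0, by omega⟩ else 0) * pfun n a 0
      else if i.val = n - 1 then pfun n a (n - 2)
      else pfun n a (i.val - 1) + pfun n a i.val)
    else if i.val + 1 = j.val then -pfun n a i.val
    else if j.val + 1 = i.val then -pfun n a j.val
    else 0

variable {n : ℕ} (a : Fin n → ℝ)

noncomputable def natSeq (k : ℕ) : ℝ := if h : k < n then a ⟨k, h⟩ else 0

@[simp] lemma natSeq_val (i : Fin n) : natSeq a i = a i := by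
  simp [natSeq]

lemma minMat_apply_eq_natSeq (i k : Fin n) : minMat n a i k = natSeq a (min i k) := by
  rw [← Fin.coe_min, natSeq_val]; rfl

lemma pfun_of_le {k : ℕ} (hk : n ≤ k + 1) : pfun n a k = 0 := dif_neg (by omega)

lemma pfun_mul_sub {a : Fin n → ℝ} (ha : Function.Injective a) {k : ℕ} (hk : k + 1 < n) :
    pfun n a k * (natSeq a (k + 1) - natSeq a k) = 1 := by
  have hne : a ⟨k + 1, hk⟩ - a ⟨k, by omega⟩ ≠ 0 :=
    sub_ne_zero.2 fun h => by simpa using ha h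
  simp only [pfun, natSeq, dif_pos hk, dif_pos (show k < n by omega)]
  exact one_div_mul_cancel hne

lemma pfun_mul_sub_min {a : Fin n → ℝ} (ha : Function.Injective a) {i : ℕ} (hi : i < n)
    (k : ℕ) : pfun n a k * (natSeq a (min i (k + 1)) - natSeq a (min i k)) =
      if k < i then 1 else 0 := by
  split_ifs with hki
  · rw [min_eq_right hki, min_eq_right hki.le, pfun_mul_sub ha (by omega)]
  · rw [min_eq_left (by omega), min_eq_left (by omega), sub_self, mul_zero]

noncomputable def tmatDiag (m : ℕ) : ℝ :=
  if m = 0 then (if h1 : 1 < n then a ⟨1, h1⟩ / a ⟨0, by omega⟩ else 0) * pfun n a 0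
  else if m = n - 1 then pfun n a (n - 2)
  else pfun n a (m - 1) + pfun n a m

lemma Tmat_apply (k j : Fin n) :
    Tmat n a k j = (if (k : ℕ) = j then tmatDiag a j else 0)
      - (if (k : ℕ) + 1 = j then pfun n a k else 0)
      - (if (k : ℕ) = j + 1 then pfun n a j else 0) := by
  change (if (k : ℕ) = j then tmatDiag a k else if (k : ℕ) + 1 = j then -pfun n a k
    else if (j : ℕ) + 1 = k then -pfun n a j else 0) = _
  obtain ⟨k, hk⟩ := k
  obtain ⟨j, hj⟩ := j
  dsimp only
  split_ifs <;> subst_vars <;> first | ring1 | omega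

lemma sum_mul_Tmat (f : ℕ → ℝ) (j : Fin n) :
    ∑ k : Fin n, f k * Tmat n a k j =
      f j * tmatDiag a j - (if (j : ℕ) = 0 then 0 else pfun n a (j - 1) * f (j - 1))
        - pfun n a j * f (j + 1) := by
  have hprev : (∑ k ∈ Finset.range n, if k + 1 = j then f k * pfun n a k else 0) =
      if (j : ℕ) = 0 then 0 else pfun n a (j - 1) * f (j - 1) := by
    split_ifs with hj
    · exact Finset.sum_eq_zero fun k _ => if_neg (by omega)
    · have hk : ∀ k, k + 1 = (j : ℕ) ↔ k = (j : ℕ) - 1 := by omega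
      rw [Finset.sum_congr rfl fun k _ => if_congr (hk k) rfl rfl, Finset.sum_ite_eq',
        if_pos (Finset.mem_range.2 (by omega)), mul_comm]
  have hnext : (∑ k ∈ Finset.range n, if k = j + 1 then f k * pfun n a j else 0) =
      pfun n a j * f (j + 1) := by
    rw [Finset.sum_ite_eq', mul_comm]
    split_ifs with hj
    · rfl
    · rw [pfun_of_le a (by simpa using hj), zero_mul]
  simp only [Tmat_apply, mul_sub, mul_ite, mul_zero]
  rw [Fin.sum_univ_eq_sum_range (fun k => (if k = j then f k * tmatDiag a j else 0)
      - (if k + 1 = j then f k * pfun n a k else 0)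
      - (if k = j + 1 then f k * pfun n a j else 0)) n]
  rw [Finset.sum_sub_distrib, Finset.sum_sub_distrib, Finset.sum_ite_eq',
    if_pos (Finset.mem_range.2 j.2), hprev, hnext]

lemma tmatDiag_zero {a : Fin n → ℝ} (hn : 1 < n) (h0 : a ⟨0, by omega⟩ ≠ 0)
    (ha : Function.Injective a) : tmatDiag a 0 = (a ⟨0, by omega⟩)⁻¹ + pfun n a 0 := by
  have h := pfun_mul_sub ha (k := 0) hn
  simp only [natSeq, dif_pos hn, dif_pos (show 0 < n by omega)] at h
  rw [tmatDiag, if_pos rfl, dif_pos hn]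
  field_simp
  linear_combination h

-- At `m = n - 1` the second summand is the junk value `pfun n a (n - 1) = 0`.
lemma tmatDiag_of_pos {m : ℕ} (hm : 0 < m) : tmatDiag a m = pfun n a (m - 1) + pfun n a m := by
  rw [tmatDiag, if_neg hm.ne']
  split_ifs with hm'
  · rw [pfun_of_le a (k := m) (by omega), show n - 2 = m - 1 by omega, add_zero]
  · rfl

lemma minMat_mul_Tmat {a : Fin n → ℝ} (hn : 1 < n) (h0 : a ⟨0, by omega⟩ ≠ 0)
    (ha : Function.Injective a) : minMat n a * Tmat n a = 1 := by
  ext ⟨i, hi⟩ ⟨j, hj⟩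
  simp only [mul_apply, one_apply, Fin.mk.injEq, minMat_apply_eq_natSeq]
  rw [sum_mul_Tmat a (fun k => natSeq a (min i k))]
  have hincr := pfun_mul_sub_min ha hi
  dsimp only
  rcases Nat.eq_zero_or_pos j with rfl | hj0
  · have ha0 : natSeq a (min i 0) = a ⟨0, by omega⟩ := by
      rw [Nat.min_zero]; exact natSeq_val a ⟨0, by omega⟩
    have := hincr 0
    rw [ha0] at this
    rw [tmatDiag_zero hn h0 ha, if_pos rfl, ha0, mul_add, mul_inv_cancel₀ h0]
    split_ifs at this ⊢ <;> first | omega | linear_combination -this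
  · have h1 := hincr (j - 1)
    have h2 := hincr j
    rw [Nat.sub_add_cancel hj0] at h1
    rw [tmatDiag_of_pos a hj0, if_neg hj0.ne']
    split_ifs at h1 h2 ⊢ <;> first | omega | linear_combination h1 - h2

/-- The inverse of the min-matrix of a positive strictly increasing sequence is the
explicit symmetric tridiagonal matrix `T`. -/
theorem stmt5 (n : ℕ) (hn : 2 ≤ n) (a : Fin n → ℝ)
    (h0 : 0 < a ⟨0, by omega⟩) (hmono : StrictMono a) :
    IsUnit (minMat n a) ∧ (minMat n a)⁻¹ = Tmat n a := by
  have h := minMat_mul_Tmat hn h0.ne' hmono.injective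
  exact ⟨(isUnit_iff_isUnit_det _).2 (isUnit_det_of_right_inverse h), inv_eq_right_inv h⟩

end MLSW5
end

section
/- For every state vector w ∈ ℝ^{3n}, every choice of densities ρ₁,…,ρₙ > 0 and every λ ∈ ℝ (or ℂ), the characteristic polynomial of A_x(w,γ) factors as det(A_x(w,γ) − λ·I_{3n}) = det((V_x − λIₙ)² − ΓH) · ∏_{i=1}^n (uᵢ − λ). -/
/-!
Listing the unknowns as `(h, u)` first and `v` last makes `A_x − λI` block upper triangular, with
the diagonal block `V_x − λI` contributing `∏ᵢ (uᵢ − λ)`. In the remaining block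
`[[V_x − λI, H], [Γ, V_x − λI]]` the two upper blocks are diagonal, hence commute, and for such
block matrices `det [[A, B], [C, D]] = det (D A − C B)`.
-/

open Matrix

namespace MLSW8

noncomputable def alpha (n : ℕ) (ρ : Fin n → ℝ) (i k : Fin n) : ℝ :=
  if k < i then ρ k / ρ i else 1

noncomputable def Gam (n : ℕ) (ρ : Fin n → ℝ) : Matrix (Fin n) (Fin n) ℝ :=
  Matrix.of (alpha n ρ)

/-- A 3×3 block matrix with n×n blocks, rows `[[A,B,C],[D,E,F],[G,H,K]]`. -/
def blk3 {n : ℕ} (A B C D E F G H K : Matrix (Fin n) (Fin n) ℝ) :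
    Matrix (Fin n ⊕ Fin n ⊕ Fin n) (Fin n ⊕ Fin n ⊕ Fin n) ℝ :=
  Matrix.fromBlocks A (Matrix.fromCols B C) (Matrix.fromRows D G)
    (Matrix.fromBlocks E F H K)

/-- The matrix `A_x(w,γ)` of the multi-layer shallow water model. -/
noncomputable def Ax (n : ℕ) (ρ : Fin n → ℝ) (h u : Fin n → ℝ) :
    Matrix (Fin n ⊕ Fin n ⊕ Fin n) (Fin n ⊕ Fin n ⊕ Fin n) ℝ :=
  blk3 (Matrix.diagonal u) (Matrix.diagonal h) 0
    (Gam n ρ) (Matrix.diagonal u) 0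
    0 0 (Matrix.diagonal u)

section CommutingBlocks

open Polynomial

variable {m R : Type*} [Fintype m] [DecidableEq m] [CommRing R]

theorem det_mul_det_fromBlocks_of_commute (A B C D : Matrix m m R) (hAB : Commute A B) :
    A.det * (fromBlocks A B C D).det = A.det * (D * A - C * B).det := by
  have hmul : fromBlocks A B C D * fromBlocks 1 (-B) 0 A = fromBlocks A 0 C (D * A - C * B) := by
    simp [fromBlocks_multiply, hAB.eq, sub_eq_neg_add]
  have := congrArg det hmul
  rwa [det_mul, det_fromBlocks_zero₂₁, det_fromBlocks_zero₁₂, det_one, one_mul, mul_comm] at this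

/-- The factor `det A` is cancelled generically: over `R[X]`, `A` is replaced by the
characteristic matrix of `-A`, whose determinant is monic, and `X` is then evaluated at `0`. -/
theorem det_fromBlocks_of_commute (A B C D : Matrix m m R) (hAB : Commute A B) :
    (fromBlocks A B C D).det = (D * A - C * B).det := by
  let ι : Matrix m m R →+* Matrix m m R[X] := (Polynomial.C : R →+* R[X]).mapMatrix
  let ε : Matrix m m R[X] →+* Matrix m m R := (evalRingHom 0).mapMatrix
  have hcomm : Commute (charmatrix (-A)) (ι B) :=
    (scalar_commute (X : R[X]) (Commute.all _) _).sub_left (hAB.neg_left.map ι)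
  have hpoly := (charpoly_monic (-A)).isRegular.left
    (det_mul_det_fromBlocks_of_commute _ _ (ι C) (ι D) hcomm)
  have hι : ∀ M, ε (ι M) = M := fun M => by ext; simp [ε, ι]
  have hA : ε (charmatrix (-A)) = A := by
    ext i j; by_cases hij : i = j <;> simp [ε, hij]
  have := congrArg (evalRingHom 0) hpoly
  rw [RingHom.map_det, RingHom.map_det, RingHom.mapMatrix_apply, fromBlocks_map] at this
  change (fromBlocks (ε _) (ε (ι B)) (ε (ι C)) (ε (ι D))).det
    = (ε (ι D * charmatrix (-A) - ι C * ι B)).det at this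
  rwa [map_sub, map_mul, map_mul, hA, hι, hι, hι] at this

end CommutingBlocks

section Blk3

variable {n : ℕ} (A B C D E F G H K : Matrix (Fin n) (Fin n) ℝ)

theorem blk3_sub_smul_one (lam : ℝ) :
    blk3 A B C D E F G H K - lam • 1 =
      blk3 (A - lam • 1) B C D (E - lam • 1) F G H (K - lam • 1) := by
  ext (i | i | i) (j | j | j) <;> simp [blk3, one_apply, fromCols, fromRows]

theorem det_blk3_of_zero :
    (blk3 A B 0 D E 0 0 0 K).det = (fromBlocks A B D E).det * K.det := by
  let e := Equiv.sumAssoc (Fin n) (Fin n) (Fin n)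
  have hreassoc :
      (blk3 A B 0 D E 0 0 0 K).submatrix e e = fromBlocks (fromBlocks A B D E) 0 0 K := by
    ext ((i | i) | i) ((j | j) | j) <;>
      simp [blk3, e, fromCols, fromRows_apply_inl, fromRows_apply_inr]
  rw [← det_submatrix_equiv_self e, hreassoc, det_fromBlocks_zero₂₁]

end Blk3

theorem stmt8_general (n : ℕ) (ρ : Fin n → ℝ) (h u : Fin n → ℝ) (lam : ℝ) :
    (Ax n ρ h u - lam • 1).det =
      ((Matrix.diagonal u - lam • 1) ^ 2 - Gam n ρ * Matrix.diagonal h).det *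
        ∏ i, (u i - lam) := by
  have hshift : Matrix.diagonal u - lam • 1 = Matrix.diagonal (fun i => u i - lam) := by
    rw [smul_one_eq_diagonal, diagonal_sub]
  have hcomm : Commute (Matrix.diagonal u - lam • 1) (Matrix.diagonal h) :=
    hshift ▸ commute_diagonal _ _
  rw [Ax, blk3_sub_smul_one, det_blk3_of_zero, det_fromBlocks_of_commute _ _ _ _ hcomm,
    ← sq, hshift, det_diagonal]

/-- Factorization of the characteristic polynomial of `A_x(w,γ)`:
`det(A_x − λI) = det((V_x − λI)² − ΓH) · ∏ᵢ (uᵢ − λ)`. -/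
theorem stmt8 (n : ℕ) (hn : 2 ≤ n) (ρ : Fin n → ℝ) (hρ : ∀ i, 0 < ρ i)
    (h u v : Fin n → ℝ) (lam : ℝ) :
    (Ax n ρ h u - lam • 1).det =
      ((Matrix.diagonal u - lam • 1) ^ 2 - Gam n ρ * Matrix.diagonal h).det *
        ∏ i, (u i - lam) :=
  stmt8_general n ρ h u lam

end MLSW8
end

section
/- Let h₁,…,hₙ > 0, H := Σ_{i=1}^n hᵢ, and define f_n(λ,u,γ) := det((diag(u)−λIₙ)² − Γ(γ)·diag(h)) as a smooth function of (λ,u,γ) ∈ ℝ × ℝⁿ × ℝ^{n−1}. Then at the point (λ,u,γ) = (ε√H, 0, (1,…,1)) with ε ∈ {+1,−1}: (i) for every j ∈ {1,…,n}, ∂f_n/∂u_j = −2ε√H · H^{n−2} · h_j; and (ii) for every j ∈ {1,…,n−1}, ∂f_n/∂γ_j = −H^{n−2} · (Σ_{k=1}^{j} h_k) · (Σ_{k=j+1}^{n} h_k). -/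
/-!
At `γ = (1,…,1)` the matrix `Γ(γ)·diag(h)` is the rank-one matrix `𝟙 hᵀ`, and at `u = 0` the
diagonal part is `λ² I = H I`. Moving `u` along `e_j`, or `γ` along `e_j` (which rescales the
lower-left block `{l > j, k ≤ j}` of `Γ`), changes `H I − 𝟙 hᵀ` by a further rank-one term, so
`f_n` restricted to either coordinate line is `det (H I − UV)` with `U V` of rank two.
Sylvester's identity reduces this to a `2 × 2` determinant:
`f_n = H^{n−2} h_j (t² − 2λt)` along `u = t e_j` and
`f_n = H^{n−2} (Σ_{k≤j} h_k)(Σ_{k>j} h_k)(1 − t)` along `γ = 1 + (t − 1) e_j`.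
-/

open Matrix

namespace MLSW13

/-- The matrix `Γ(γ)` with `Γ(γ)_{l,k} = ∏_{j=k}^{l−1} γ_j` for `k < l` and `1` otherwise. -/
noncomputable def GamMat (n : ℕ) (γ : Fin (n - 1) → ℝ) : Matrix (Fin n) (Fin n) ℝ :=
  Matrix.of fun l k =>
    if k < l then
      ∏ j ∈ (Finset.Ico k.val l.val).attach,
        γ ⟨j.1, by
          have hj := Finset.mem_Ico.mp j.2
          have hl := l.isLt
          omega⟩
    else 1

/-- `f_n(λ,u,γ) := det((diag(u) − λI)² − Γ(γ)·diag(h))`. -/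
noncomputable def fn (n : ℕ) (h : Fin n → ℝ) (lam : ℝ) (u : Fin n → ℝ)
    (γ : Fin (n - 1) → ℝ) : ℝ :=
  ((Matrix.diagonal u - lam • 1) ^ 2 - GamMat n γ * Matrix.diagonal h).det

section

variable {K : Type*} [Field K] {ι κ : Type*} [Fintype ι] [DecidableEq ι] [Fintype κ]
  [DecidableEq κ]

theorem pow_card_mul_det_smul_one_sub_mul_comm {c : K} (hc : c ≠ 0)
    (A : Matrix ι κ K) (B : Matrix κ ι K) :
    c ^ Fintype.card κ * det (c • 1 - A * B) = c ^ Fintype.card ι * det (c • 1 - B * A) := by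
  have hAB : c • 1 - A * B = c • (1 - A * (c⁻¹ • B)) := by
    rw [Matrix.mul_smul, smul_sub, smul_smul, mul_inv_cancel₀ hc, one_smul]
  have hBA : c • 1 - B * A = c • (1 - (c⁻¹ • B) * A) := by
    rw [Matrix.smul_mul, smul_sub, smul_smul, mul_inv_cancel₀ hc, one_smul]
  rw [hAB, hBA, det_smul, det_smul, det_one_sub_mul_comm]
  ring

theorem det_smul_one_sub_vecMulVec_add_vecMulVec (h2 : 2 ≤ Fintype.card ι) {c : K}
    (hc : c ≠ 0) (x p y q : ι → K) :
    det (c • 1 - (vecMulVec x p + vecMulVec y q)) =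
      c ^ (Fintype.card ι - 2) * ((c - p ⬝ᵥ x) * (c - q ⬝ᵥ y) - p ⬝ᵥ y * (q ⬝ᵥ x)) := by
  have hUV : vecMulVec x p + vecMulVec y q = (of ![x, y])ᵀ * of ![p, q] := by
    ext l k
    simp [vecMulVec_apply, mul_apply, Fin.sum_univ_two]
  have hVU : of ![p, q] * (of ![x, y])ᵀ = !![p ⬝ᵥ x, p ⬝ᵥ y; q ⬝ᵥ x, q ⬝ᵥ y] := by
    ext i j
    fin_cases i <;> fin_cases j <;> rfl
  have hdet : det (c • 1 - !![p ⬝ᵥ x, p ⬝ᵥ y; q ⬝ᵥ x, q ⬝ᵥ y]) =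
      (c - p ⬝ᵥ x) * (c - q ⬝ᵥ y) - p ⬝ᵥ y * (q ⬝ᵥ x) := by
    rw [det_fin_two]
    simp
  have key := pow_card_mul_det_smul_one_sub_mul_comm hc (of ![x, y])ᵀ (of ![p, q])
  rw [← hUV, hVU, hdet, Fintype.card_fin, ← Nat.sub_add_cancel h2, pow_add] at key
  apply mul_left_cancel₀ (pow_ne_zero 2 hc)
  linear_combination key

end

theorem diagonal_sub_smul_one_sq {R ι : Type*} [CommRing R] [Fintype ι] [DecidableEq ι]
    (u : ι → R) (lam : R) :
    (diagonal u - lam • 1) ^ 2 = diagonal fun i => (u i - lam) ^ 2 := by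
  rw [smul_one_eq_diagonal, diagonal_sub, diagonal_pow]
  rfl

theorem gamMat_const_one_apply (n : ℕ) (l k : Fin n) : GamMat n (fun _ => 1) l k = 1 := by
  simp [GamMat]

theorem gamMat_update_const_one_apply {n : ℕ} (j : Fin (n - 1)) (t : ℝ) (l k : Fin n) :
    GamMat n (Function.update (fun _ => 1) j t) l k
      = if (k : ℕ) ≤ j ∧ (j : ℕ) < l then t else 1 := by
  by_cases hkl : k < l
  · have h1 : GamMat n (Function.update (fun _ => (1 : ℝ)) j t) l k
        = ∏ m ∈ Finset.Ico k.val l.val, (if m = (j : ℕ) then t else 1) := by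
      rw [GamMat, Matrix.of_apply, if_pos hkl, ← Finset.prod_attach (Finset.Ico k.val l.val)
        (fun m => if m = (j : ℕ) then t else 1)]
      refine Finset.prod_congr rfl fun x _ => ?_
      simp [Function.update_apply, Fin.ext_iff]
    rw [h1, Finset.prod_ite_eq' (Finset.Ico k.val l.val) (j : ℕ) (fun _ => t)]
    congr 1
    simp [Finset.mem_Ico]
  · rw [GamMat, Matrix.of_apply, if_neg hkl, eq_comm, if_neg]
    rw [Fin.lt_def, not_lt] at hkl
    omega

section

variable {n : ℕ} (h : Fin n → ℝ) {lam : ℝ}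

theorem fn_update_u (hn : 2 ≤ n) (hH : ∑ i, h i ≠ 0) (hlam : lam ^ 2 = ∑ i, h i)
    (j : Fin n) (t : ℝ) :
    fn n h lam (Function.update (fun _ => 0) j t) (fun _ => 1)
      = (∑ i, h i) ^ (n - 2) * h j * (t ^ 2 - 2 * lam * t) := by
  have hM : (diagonal (Function.update (fun _ => 0) j t) - lam • 1) ^ 2
      - GamMat n (fun _ => 1) * diagonal h
      = (∑ i, h i) • 1 -
        (vecMulVec 1 h + vecMulVec (Pi.single j (2 * lam * t - t ^ 2)) (Pi.single j 1)) := by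
    rw [diagonal_sub_smul_one_sq]
    ext l k
    simp only [Matrix.sub_apply, Matrix.add_apply, Matrix.smul_apply, diagonal_apply,
      mul_diagonal, gamMat_const_one_apply, vecMulVec_apply, Pi.single_apply,
      Function.update_apply, one_apply, smul_eq_mul, Pi.one_apply]
    split_ifs <;> subst_vars <;> first | ring1 | linear_combination hlam | (exfalso; simp_all)
  rw [fn, hM, det_smul_one_sub_vecMulVec_add_vecMulVec (by simpa) hH]
  rw [Fintype.card_fin, dotProduct_one h]
  simp only [single_dotProduct, dotProduct_single, Pi.single_eq_same, Pi.one_apply]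
  ring

theorem fn_update_γ (hn : 2 ≤ n) (hH : ∑ i, h i ≠ 0) (hlam : lam ^ 2 = ∑ i, h i)
    (j : Fin (n - 1)) (t : ℝ) :
    fn n h lam (fun _ => 0) (Function.update (fun _ => 1) j t)
      = (∑ i, h i) ^ (n - 2) *
          ((∑ k ∈ Finset.univ.filter fun k : Fin n => k.val ≤ j.val, h k) *
            (∑ k ∈ Finset.univ.filter fun k : Fin n => j.val < k.val, h k)) * (1 - t) := by
  have hM : (diagonal (fun _ => 0) - lam • 1) ^ 2
      - GamMat n (Function.update (fun _ => 1) j t) * diagonal h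
      = (∑ i, h i) • 1 - (vecMulVec 1 h +
          vecMulVec (fun l : Fin n => if (j : ℕ) < l then t - 1 else 0)
            (fun k : Fin n => if (k : ℕ) ≤ j then h k else 0)) := by
    rw [diagonal_sub_smul_one_sq]
    ext l k
    simp only [Matrix.sub_apply, Matrix.add_apply, Matrix.smul_apply, diagonal_apply,
      mul_diagonal, gamMat_update_const_one_apply, vecMulVec_apply, one_apply, smul_eq_mul,
      Pi.one_apply]
    split_ifs <;> first | omega | ring1 | linear_combination hlam
  rw [fn, hM, det_smul_one_sub_vecMulVec_add_vecMulVec (by simpa) hH]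
  have hpy : h ⬝ᵥ (fun l : Fin n => if (j : ℕ) < l then t - 1 else 0)
      = (t - 1) * ∑ k ∈ Finset.univ.filter fun k : Fin n => j.val < k.val, h k := by
    rw [Finset.sum_filter, Finset.mul_sum]
    exact Finset.sum_congr rfl fun k _ => by dsimp only; split_ifs <;> ring
  have hqx : (fun k : Fin n => if (k : ℕ) ≤ j then h k else 0) ⬝ᵥ 1
      = ∑ k ∈ Finset.univ.filter fun k : Fin n => k.val ≤ j.val, h k := by
    rw [dotProduct_one, Finset.sum_filter]
  have hqy : (fun k : Fin n => if (k : ℕ) ≤ j then h k else 0) ⬝ᵥ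
      (fun l => if (j : ℕ) < l then t - 1 else 0) = 0 :=
    Finset.sum_eq_zero fun k _ => by dsimp only; split_ifs <;> first | omega | ring1
  rw [Fintype.card_fin, dotProduct_one, hpy, hqx, hqy]
  ring

theorem hasDerivAt_fn_update_u (hn : 2 ≤ n) (hH : ∑ i, h i ≠ 0) (hlam : lam ^ 2 = ∑ i, h i)
    (j : Fin n) :
    HasDerivAt (fun t => fn n h lam (Function.update (fun _ => 0) j t) (fun _ => 1))
      (-2 * lam * (∑ i, h i) ^ (n - 2) * h j) 0 := by
  simp_rw [fn_update_u h hn hH hlam]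
  have hs : HasDerivAt (fun t : ℝ => t ^ 2 - 2 * lam * t) (-2 * lam) 0 := by
    simpa using (hasDerivAt_pow 2 (0 : ℝ)).fun_sub ((hasDerivAt_id (0 : ℝ)).const_mul (2 * lam))
  exact (hs.const_mul _).congr_deriv (by ring)

theorem hasDerivAt_fn_update_γ (hn : 2 ≤ n) (hH : ∑ i, h i ≠ 0) (hlam : lam ^ 2 = ∑ i, h i)
    (j : Fin (n - 1)) :
    HasDerivAt (fun t => fn n h lam (fun _ => 0) (Function.update (fun _ => 1) j t))
      (-((∑ i, h i) ^ (n - 2) *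
            (∑ k ∈ Finset.univ.filter fun k : Fin n => k.val ≤ j.val, h k) *
            (∑ k ∈ Finset.univ.filter fun k : Fin n => j.val < k.val, h k))) 1 := by
  simp_rw [fn_update_γ h hn hH hlam]
  exact (((hasDerivAt_id' 1).const_sub 1).const_mul _).congr_deriv (by ring)

end

/-- Partial derivatives of `f_n` at `(λ,u,γ) = (ε√H, 0, (1,…,1))`:
`∂f_n/∂u_j = −2ε√H·H^{n−2}·h_j` and
`∂f_n/∂γ_j = −H^{n−2}·(Σ_{k≤j} h_k)·(Σ_{k>j} h_k)`. -/
theorem stmt13 (n : ℕ) (hn : 2 ≤ n) (h : Fin n → ℝ) (hh : ∀ i, 0 < h i)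
    (ε : ℝ) (hε : ε = 1 ∨ ε = -1) :
    (∀ j : Fin n,
      HasDerivAt
        (fun t : ℝ =>
          fn n h (ε * Real.sqrt (∑ i, h i))
            (Function.update (fun _ : Fin n => (0 : ℝ)) j t) (fun _ => 1))
        (-2 * (ε * Real.sqrt (∑ i, h i)) * (∑ i, h i) ^ (n - 2) * h j) 0) ∧
    (∀ j : Fin (n - 1),
      HasDerivAt
        (fun t : ℝ =>
          fn n h (ε * Real.sqrt (∑ i, h i)) (fun _ => 0)
            (Function.update (fun _ : Fin (n - 1) => (1 : ℝ)) j t))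
        (-((∑ i, h i) ^ (n - 2) *
            (∑ k ∈ Finset.univ.filter fun k : Fin n => k.val ≤ j.val, h k) *
            (∑ k ∈ Finset.univ.filter fun k : Fin n => j.val < k.val, h k))) 1) := by
  have hH : 0 < ∑ i, h i := Finset.sum_pos (fun i _ => hh i) ⟨⟨0, by omega⟩, Finset.mem_univ _⟩
  have hlam : (ε * Real.sqrt (∑ i, h i)) ^ 2 = ∑ i, h i := by
    rcases hε with rfl | rfl <;> simp [Real.sq_sqrt hH.le]
  exact ⟨hasDerivAt_fn_update_u h hn hH.ne' hlam, hasDerivAt_fn_update_γ h hn hH.ne' hlam⟩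

end MLSW13
end

section
/- Let w ∈ ℝ^{3n} be a state vector and ρ₁,…,ρₙ > 0. Suppose for some i ∈ {1,…,n−1} that ρᵢ = ρᵢ₊₁ (i.e. γᵢ = 1) and uᵢ = uᵢ₊₁. Then, denoting by e₁,…,e_{3n} the standard basis of ℝ^{3n}: the vector eᵢ − eᵢ₊₁ is a right eigenvector of A_x(w,γ) with eigenvalue uᵢ, i.e. A_x(w,γ)(eᵢ − eᵢ₊₁) = uᵢ(eᵢ − eᵢ₊₁); and the row vector e_{n+i}ᵀ − e_{n+i+1}ᵀ is a left eigenvector with the same eigenvalue, i.e. (e_{n+i}ᵀ − e_{n+i+1}ᵀ)·A_x(w,γ) = uᵢ·(e_{n+i}ᵀ − e_{n+i+1}ᵀ). -/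
/-!
Equal densities of the adjacent layers `i, i + 1` make rows `i, i + 1` and columns `i, i + 1`
of `Γ` coincide (for the entry `α_{i+1,i} = ρᵢ / ρᵢ₊₁` this needs `ρᵢ₊₁ ≠ 0`), so `Γ`
annihilates `eᵢ - eᵢ₊₁` from either side; equal velocities make the diagonal blocks `V_x` act
on it as multiplication by `uᵢ`. The block shape of `A_x` does the rest.
-/

open Matrix

namespace MLSW14

noncomputable def alpha (n : ℕ) (ρ : Fin n → ℝ) (i k : Fin n) : ℝ :=
  if k < i then ρ k / ρ i else 1

noncomputable def Gam (n : ℕ) (ρ : Fin n → ℝ) : Matrix (Fin n) (Fin n) ℝ :=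
  Matrix.of (alpha n ρ)

/-- A 3×3 block matrix with n×n blocks, rows `[[A,B,C],[D,E,F],[G,H,K]]`. -/
def blk3 {n : ℕ} (A B C D E F G H K : Matrix (Fin n) (Fin n) ℝ) :
    Matrix (Fin n ⊕ Fin n ⊕ Fin n) (Fin n ⊕ Fin n ⊕ Fin n) ℝ :=
  Matrix.fromBlocks A (Matrix.fromCols B C) (Matrix.fromRows D G)
    (Matrix.fromBlocks E F H K)

/-- The matrix `A_x(w,γ)` of the multi-layer shallow water model. -/
noncomputable def Ax (n : ℕ) (ρ : Fin n → ℝ) (h u : Fin n → ℝ) :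
    Matrix (Fin n ⊕ Fin n ⊕ Fin n) (Fin n ⊕ Fin n ⊕ Fin n) ℝ :=
  blk3 (Matrix.diagonal u) (Matrix.diagonal h) 0
    (Gam n ρ) (Matrix.diagonal u) 0
    0 0 (Matrix.diagonal u)

/-- The vector `eᵢ − eᵢ₊₁` (within one `Fin n` block). -/
noncomputable def evec (n : ℕ) (i : Fin n) (hi : i.val + 1 < n) : Fin n → ℝ :=
  fun j => if j = i then 1 else if j = (⟨i.val + 1, hi⟩ : Fin n) then -1 else 0

section Blocks

variable {n : ℕ} (A B C D E F G H K : Matrix (Fin n) (Fin n) ℝ)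

theorem blk3_mulVec_elim_zero (x : Fin n → ℝ) :
    blk3 A B C D E F G H K *ᵥ Sum.elim x (0 : Fin n ⊕ Fin n → ℝ) =
      Sum.elim (A *ᵥ x) (Sum.elim (D *ᵥ x) (G *ᵥ x)) := by
  simp [blk3, fromBlocks_mulVec]

theorem elim_zero_elim_vecMul_blk3 (y : Fin n → ℝ) :
    Sum.elim 0 (Sum.elim y 0) ᵥ* blk3 A B C D E F G H K =
      Sum.elim (y ᵥ* D) (Sum.elim (y ᵥ* E) (y ᵥ* F)) := by
  simp [blk3, vecMul_fromBlocks, vecMul_fromRows]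

end Blocks

theorem smul_sum_elim {α β γ R : Type*} [SMul R γ] (c : R) (x : α → γ) (y : β → γ) :
    c • Sum.elim x y = Sum.elim (c • x) (c • y) := by
  ext (j | j) <;> rfl

section SingleSubSingle

variable {ι κ R : Type*} [Fintype ι] [DecidableEq ι] [Ring R] {i j : ι}

theorem diagonal_mulVec_single_sub_single {u : ι → R} (hu : u i = u j) :
    diagonal u *ᵥ (Pi.single i 1 - Pi.single j 1) = u i • (Pi.single i 1 - Pi.single j 1) := by
  rw [mulVec_sub, diagonal_mulVec_single, diagonal_mulVec_single, ← hu, smul_sub,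
    ← Pi.single_smul', ← Pi.single_smul', smul_eq_mul]

theorem single_sub_single_vecMul_diagonal {u : ι → R} (hu : u i = u j) :
    (Pi.single i 1 - Pi.single j 1) ᵥ* diagonal u = u i • (Pi.single i 1 - Pi.single j 1) := by
  rw [sub_vecMul, single_vecMul_diagonal, single_vecMul_diagonal, ← hu, smul_sub,
    ← Pi.single_smul', ← Pi.single_smul', smul_eq_mul, one_mul, mul_one]

theorem mulVec_single_sub_single_of_col_eq {M : Matrix κ ι R} (h : M.col i = M.col j) :
    M *ᵥ (Pi.single i 1 - Pi.single j 1) = 0 := by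
  rw [mulVec_sub, mulVec_single_one, mulVec_single_one, h, sub_self]

theorem single_sub_single_vecMul_of_row_eq {M : Matrix ι κ R} (h : M.row i = M.row j) :
    (Pi.single i 1 - Pi.single j 1) ᵥ* M = 0 := by
  rw [sub_vecMul, single_one_vecMul, single_one_vecMul, h, sub_self]

end SingleSubSingle

section Gam

variable {n : ℕ} {ρ : Fin n → ℝ} {i j : Fin n}

theorem alpha_eq_alpha_of_covBy_left (hij : i ⋖ j) (hρ : ρ i = ρ j) (hρj : ρ j ≠ 0) (k : Fin n) :
    alpha n ρ i k = alpha n ρ j k := by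
  rcases lt_trichotomy k i with hk | rfl | hk
  · simp [alpha, hk, hk.trans hij.lt, hρ]
  · simp [alpha, hij.lt, hρ, hρj]
  · simp [alpha, hk.not_gt, (hij.ge_of_gt hk).not_gt]

theorem alpha_eq_alpha_of_covBy_right (hij : i ⋖ j) (hρ : ρ i = ρ j) (hρj : ρ j ≠ 0) (k : Fin n) :
    alpha n ρ k i = alpha n ρ k j := by
  rcases lt_trichotomy j k with hk | rfl | hk
  · simp [alpha, hk, hij.lt.trans hk, hρ]
  · simp [alpha, hij.lt, hρ, hρj]
  · simp [alpha, hk.not_gt, (hij.le_of_lt hk).not_gt]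

theorem Gam_row_eq_of_covBy (hij : i ⋖ j) (hρ : ρ i = ρ j) (hρj : ρ j ≠ 0) :
    (Gam n ρ).row i = (Gam n ρ).row j :=
  funext (alpha_eq_alpha_of_covBy_left hij hρ hρj)

theorem Gam_col_eq_of_covBy (hij : i ⋖ j) (hρ : ρ i = ρ j) (hρj : ρ j ≠ 0) :
    (Gam n ρ).col i = (Gam n ρ).col j :=
  funext (alpha_eq_alpha_of_covBy_right hij hρ hρj)

end Gam

theorem evec_eq_single_sub_single (n : ℕ) (i : Fin n) (hi : i.val + 1 < n) :
    evec n i hi = Pi.single i 1 - Pi.single ⟨i.val + 1, hi⟩ 1 := by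
  have hne : i ≠ ⟨i.val + 1, hi⟩ := Fin.ne_of_val_ne (Nat.succ_ne_self _).symm
  ext j
  by_cases hj : j = i
  · simp [evec, hj, hne]
  · by_cases hj' : j = ⟨i.val + 1, hi⟩ <;> simp [evec, hj, hj', hne.symm]

theorem stmt14_general (n : ℕ) (ρ : Fin n → ℝ) (hρ : ∀ i, 0 < ρ i)
    (h u : Fin n → ℝ) (i : Fin n) (hi : i.val + 1 < n)
    (hρeq : ρ i = ρ ⟨i.val + 1, hi⟩) (hueq : u i = u ⟨i.val + 1, hi⟩) :
    (Ax n ρ h u).mulVec (Sum.elim (evec n i hi) (0 : Fin n ⊕ Fin n → ℝ)) =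
      u i • Sum.elim (evec n i hi) (0 : Fin n ⊕ Fin n → ℝ) ∧
    Matrix.vecMul
        (Sum.elim (0 : Fin n → ℝ) (Sum.elim (evec n i hi) (0 : Fin n → ℝ)))
        (Ax n ρ h u) =
      u i • Sum.elim (0 : Fin n → ℝ) (Sum.elim (evec n i hi) (0 : Fin n → ℝ)) := by
  have hcov : i ⋖ ⟨i.val + 1, hi⟩ := Fin.covBy_iff.2 (Order.covBy_add_one _)
  have hρ₀ := (hρ ⟨i.val + 1, hi⟩).ne'
  rw [evec_eq_single_sub_single]
  constructor
  · rw [Ax, blk3_mulVec_elim_zero, diagonal_mulVec_single_sub_single hueq,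
      mulVec_single_sub_single_of_col_eq (Gam_col_eq_of_covBy hcov hρeq hρ₀), zero_mulVec,
      Sum.elim_zero_zero, smul_sum_elim, smul_zero]
  · rw [Ax, elim_zero_elim_vecMul_blk3, single_sub_single_vecMul_diagonal hueq,
      single_sub_single_vecMul_of_row_eq (Gam_row_eq_of_covBy hcov hρeq hρ₀), vecMul_zero,
      smul_sum_elim, smul_sum_elim, smul_zero]

/-- In the merger case `ρᵢ = ρᵢ₊₁`, `uᵢ = uᵢ₊₁`: `eᵢ − eᵢ₊₁` is a right eigenvector of
`A_x(w,γ)` with eigenvalue `uᵢ`, and `e_{n+i}ᵀ − e_{n+i+1}ᵀ` is a left eigenvector with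
the same eigenvalue. -/
theorem stmt14 (n : ℕ) (hn : 2 ≤ n) (ρ : Fin n → ℝ) (hρ : ∀ i, 0 < ρ i)
    (h u v : Fin n → ℝ) (i : Fin n) (hi : i.val + 1 < n)
    (hρeq : ρ i = ρ ⟨i.val + 1, hi⟩) (hueq : u i = u ⟨i.val + 1, hi⟩) :
    (Ax n ρ h u).mulVec (Sum.elim (evec n i hi) (0 : Fin n ⊕ Fin n → ℝ)) =
      u i • Sum.elim (evec n i hi) (0 : Fin n ⊕ Fin n → ℝ) ∧
    Matrix.vecMul
        (Sum.elim (0 : Fin n → ℝ) (Sum.elim (evec n i hi) (0 : Fin n → ℝ)))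
        (Ax n ρ h u) =
      u i • Sum.elim (0 : Fin n → ℝ) (Sum.elim (evec n i hi) (0 : Fin n → ℝ)) :=
  stmt14_general n ρ hρ h u i hi hρeq hueq

end MLSW14
end

section
/- For every augmented state vector v ∈ ℝ^{4n}, densities ρ₁,…,ρₙ > 0, Coriolis parameter f ∈ ℝ and λ ∈ ℝ (or ℂ), the characteristic polynomial of the augmented matrix factors as det(A^a_x(v,γ) − λ·I_{4n}) = (−λ)ⁿ · det(A_x(w,γ) − λ·I_{3n}), where w ∈ ℝ^{3n} consists of the first 3n coordinates of v. -/
/-! After subtracting `λ`, the rows of the `v`-block of `A^a_x` are `-λ` times the identity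
rows, so that block splits off as the factor `(-λ)ⁿ`. In the remaining `(h, u, w)`-matrix the
`(h, u)`-rows vanish on the `w`-columns, so it is block lower triangular: the Coriolis block `W`
does not enter the determinant, which is therefore the same as that of `A_x - λ`. -/

open Matrix

namespace MLSW16

noncomputable def alpha (n : ℕ) (ρ : Fin n → ℝ) (i k : Fin n) : ℝ :=
  if k < i then ρ k / ρ i else 1

noncomputable def Gam (n : ℕ) (ρ : Fin n → ℝ) : Matrix (Fin n) (Fin n) ℝ :=
  Matrix.of (alpha n ρ)

/-- A 3×3 block matrix with n×n blocks, rows `[[A,B,C],[D,E,F],[G,H,K]]`. -/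
def blk3 {n : ℕ} (A B C D E F G H K : Matrix (Fin n) (Fin n) ℝ) :
    Matrix (Fin n ⊕ Fin n ⊕ Fin n) (Fin n ⊕ Fin n ⊕ Fin n) ℝ :=
  Matrix.fromBlocks A (Matrix.fromCols B C) (Matrix.fromRows D G)
    (Matrix.fromBlocks E F H K)

/-- The 3n×3n matrix `A_x(w,γ)` of the multi-layer shallow water model. -/
noncomputable def Ax (n : ℕ) (ρ : Fin n → ℝ) (h u : Fin n → ℝ) :
    Matrix (Fin n ⊕ Fin n ⊕ Fin n) (Fin n ⊕ Fin n ⊕ Fin n) ℝ :=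
  blk3 (Matrix.diagonal u) (Matrix.diagonal h) 0
    (Gam n ρ) (Matrix.diagonal u) 0
    0 0 (Matrix.diagonal u)

/-- The 4n×4n augmented matrix `A^a_x(v,γ)`, with block rows
`[[V_x, H, 0, 0],[Γ, V_x, V_y, 0],[0,0,0,0],[0, W, 0, V_x]]`. -/
noncomputable def Aax (n : ℕ) (ρ : Fin n → ℝ) (h u v w : Fin n → ℝ) (f : ℝ) :
    Matrix (Fin n ⊕ (Fin n ⊕ Fin n ⊕ Fin n)) (Fin n ⊕ (Fin n ⊕ Fin n ⊕ Fin n)) ℝ :=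
  Matrix.fromBlocks (Matrix.diagonal u)
    (Matrix.fromCols (Matrix.diagonal h) (Matrix.fromCols 0 0))
    (Matrix.fromRows (Gam n ρ) (Matrix.fromRows 0 0))
    (blk3 (Matrix.diagonal u) (Matrix.diagonal v) 0
      0 0 0
      (Matrix.diagonal fun i => w i + f) 0 (Matrix.diagonal u))

section BlockDet

variable {R ι α κ μ : Type*} [CommRing R] [Fintype ι] [DecidableEq ι] [Fintype α] [DecidableEq α]
  [Fintype κ] [DecidableEq κ] [Fintype μ] [DecidableEq μ]

theorem det_eq_det_submatrix_mul_of_equiv_sum (M : Matrix ι ι R) (e : ι ≃ κ ⊕ μ)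
    (hM : ∀ i j, M (e.symm (.inl i)) (e.symm (.inr j)) = 0) :
    M.det = (M.submatrix (e.symm ∘ .inl) (e.symm ∘ .inl)).det *
      (M.submatrix (e.symm ∘ .inr) (e.symm ∘ .inr)).det := by
  have hzero : (reindex e e M).toBlocks₁₂ = 0 := by
    ext i j
    exact hM i j
  rw [← det_reindex_self e M, ← fromBlocks_toBlocks (reindex e e M), hzero,
    det_fromBlocks_zero₁₂]
  rfl

theorem det_fromBlocks_fromCols_zero (A : Matrix α α R) (B : Matrix α κ R) (C : Matrix κ α R) (D : Matrix κ κ R)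
    (E₁ : Matrix μ α R) (E₂ : Matrix μ κ R) (F : Matrix μ μ R) :
    (fromBlocks A (fromCols B 0) (fromRows C E₁) (fromBlocks D 0 E₂ F)).det =
      (fromBlocks A B C D).det * F.det := by
  rw [← det_reindex_self (Equiv.sumAssoc α κ μ).symm]
  convert det_fromBlocks_zero₁₂ (fromBlocks A B C D) (fromCols E₁ E₂) F
  ext (((i | i) | i)) (((j | j) | j)) <;> rfl

end BlockDet

def sumThirdToFront (α β γ δ : Type*) : α ⊕ (β ⊕ γ ⊕ δ) ≃ γ ⊕ (α ⊕ β ⊕ δ) where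
  toFun
    | .inl a => .inr (.inl a)
    | .inr (.inl b) => .inr (.inr (.inl b))
    | .inr (.inr (.inl c)) => .inl c
    | .inr (.inr (.inr d)) => .inr (.inr (.inr d))
  invFun
    | .inl c => .inr (.inr (.inl c))
    | .inr (.inl a) => .inl a
    | .inr (.inr (.inl b)) => .inr (.inl b)
    | .inr (.inr (.inr d)) => .inr (.inr (.inr d))
  left_inv := by rintro (a | b | c | d) <;> rfl
  right_inv := by rintro (c | a | b | d) <;> rfl

section Blocks

variable (n : ℕ) (ρ : Fin n → ℝ) (h u v w : Fin n → ℝ) (f lam : ℝ)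

theorem Ax_sub_smul_one :
    Ax n ρ h u - lam • 1 =
      fromBlocks (diagonal fun i => u i - lam) (fromCols (diagonal h) 0) (fromRows (Gam n ρ) 0)
        (fromBlocks (diagonal fun i => u i - lam) 0 0 (diagonal fun i => u i - lam)) := by
  ext (i | i | i) (j | j | j) <;> by_cases hij : i = j <;> simp [Ax, blk3, one_apply, hij]

theorem det_Aax_sub_smul_one :
    (Aax n ρ h u v w f - lam • 1).det = (-lam) ^ n *
      (fromBlocks (diagonal fun i => u i - lam) (fromCols (diagonal h) 0) (fromRows (Gam n ρ) 0)
        (fromBlocks (diagonal fun i => u i - lam) 0 (diagonal fun i => w i + f)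
          (diagonal fun i => u i - lam))).det := by
  set e := sumThirdToFront (Fin n) (Fin n) (Fin n) (Fin n)
  have hvRows : ∀ i j, (Aax n ρ h u v w f - lam • 1) (e.symm (.inl i)) (e.symm (.inr j)) = 0 := by
    intro i j
    rcases j with j | j | j <;> simp [e, sumThirdToFront, Aax, blk3, one_apply]
  have hvBlock : (Aax n ρ h u v w f - lam • 1).submatrix (e.symm ∘ .inl) (e.symm ∘ .inl) =
      diagonal fun _ => -lam := by
    ext i j
    by_cases hij : i = j <;> simp [e, sumThirdToFront, Aax, blk3, one_apply, hij]
  rw [det_eq_det_submatrix_mul_of_equiv_sum _ e hvRows, hvBlock, det_diagonal,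
    Finset.prod_const, Finset.card_univ, Fintype.card_fin]
  congr 2
  ext (i | i | i) (j | j | j) <;> by_cases hij : i = j <;>
    simp [e, sumThirdToFront, Aax, blk3, one_apply, hij]

end Blocks

theorem stmt16_general (n : ℕ) (ρ : Fin n → ℝ)
    (h u v w : Fin n → ℝ) (f lam : ℝ) :
    (Aax n ρ h u v w f - lam • 1).det =
      (-lam) ^ n * (Ax n ρ h u - lam • 1).det := by
  rw [det_Aax_sub_smul_one, Ax_sub_smul_one, det_fromBlocks_fromCols_zero,
    det_fromBlocks_fromCols_zero]

/-- Characteristic polynomial of the augmented matrix: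
`det(A^a_x − λI_{4n}) = (−λ)ⁿ det(A_x − λI_{3n})`. -/
theorem stmt16 (n : ℕ) (hn : 2 ≤ n) (ρ : Fin n → ℝ) (hρ : ∀ i, 0 < ρ i)
    (h u v w : Fin n → ℝ) (f lam : ℝ) :
    (Aax n ρ h u v w f - lam • 1).det =
      (-lam) ^ n * (Ax n ρ h u - lam • 1).det :=
  stmt16_general n ρ h u v w f lam

end MLSW16
end

section
/- For every augmented state vector v ∈ ℝ^{4n}, densities ρ₁,…,ρₙ > 0 and Coriolis parameter f ∈ ℝ, the 4n×4n matrix S^a(v,γ) is symmetric, and both products S^a(v,γ)·A^a_x(v,γ) and S^a(v,γ)·A^a_y(v,γ) are symmetric matrices. -/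
/-!
The matrix `ΔΓ` has entries `α_{n,min(i,j)}` (because `α_{n,i} α_{i,k} = α_{n,k}` for `k < i`),
so it is symmetric. Apart from `Γ`, every block of `S^a`, `A^a_x`, `A^a_y` is diagonal. Diagonal
matrices commute, so `Δ D Γ = D (ΔΓ)` for diagonal `D`; after this rewriting each block of `S^a`,
`S^a A^a_x`, `S^a A^a_y` is a sum of products of diagonal matrices and the symmetric matrix `ΔΓ`,
and symmetry is checked entrywise.
-/

open Matrix

namespace MLSW17

noncomputable def alpha (n : ℕ) (ρ : Fin n → ℝ) (i k : Fin n) : ℝ :=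
  if k < i then ρ k / ρ i else 1

noncomputable def Gam (n : ℕ) (ρ : Fin n → ℝ) : Matrix (Fin n) (Fin n) ℝ :=
  Matrix.of (alpha n ρ)

/-- `α_{n,i}`. -/
noncomputable def alphaN (n : ℕ) (ρ : Fin n → ℝ) (i : Fin n) : ℝ :=
  if h : n - 1 < n then alpha n ρ ⟨n - 1, h⟩ i else 1

noncomputable def Delta (n : ℕ) (ρ : Fin n → ℝ) : Matrix (Fin n) (Fin n) ℝ :=
  Matrix.diagonal (alphaN n ρ)

/-- A 3×3 block matrix with n×n blocks, rows `[[A,B,C],[D,E,F],[G,H,K]]`. -/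
def blk3 {n : ℕ} (A B C D E F G H K : Matrix (Fin n) (Fin n) ℝ) :
    Matrix (Fin n ⊕ Fin n ⊕ Fin n) (Fin n ⊕ Fin n ⊕ Fin n) ℝ :=
  Matrix.fromBlocks A (Matrix.fromCols B C) (Matrix.fromRows D G)
    (Matrix.fromBlocks E F H K)

/-- `W = diag(wᵢ + f)`. -/
noncomputable def Wm (n : ℕ) (w : Fin n → ℝ) (f : ℝ) : Matrix (Fin n) (Fin n) ℝ :=
  Matrix.diagonal fun i => w i + f

/-- The 4n×4n augmented matrix `A^a_x(v,γ)`. -/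
noncomputable def Aax (n : ℕ) (ρ : Fin n → ℝ) (h u v w : Fin n → ℝ) (f : ℝ) :
    Matrix (Fin n ⊕ (Fin n ⊕ Fin n ⊕ Fin n)) (Fin n ⊕ (Fin n ⊕ Fin n ⊕ Fin n)) ℝ :=
  Matrix.fromBlocks (Matrix.diagonal u)
    (Matrix.fromCols (Matrix.diagonal h) (Matrix.fromCols 0 0))
    (Matrix.fromRows (Gam n ρ) (Matrix.fromRows 0 0))
    (blk3 (Matrix.diagonal u) (Matrix.diagonal v) 0
      0 0 0
      (Wm n w f) 0 (Matrix.diagonal u))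

/-- The 4n×4n augmented matrix `A^a_y(v,γ)`, with block rows
`[[V_y, 0, H, 0],[0,0,0,0],[Γ, V_x, V_y, 0],[0, 0, W, V_y]]`. -/
noncomputable def Aay (n : ℕ) (ρ : Fin n → ℝ) (h u v w : Fin n → ℝ) (f : ℝ) :
    Matrix (Fin n ⊕ (Fin n ⊕ Fin n ⊕ Fin n)) (Fin n ⊕ (Fin n ⊕ Fin n ⊕ Fin n)) ℝ :=
  Matrix.fromBlocks (Matrix.diagonal v)
    (Matrix.fromCols 0 (Matrix.fromCols (Matrix.diagonal h) 0))
    (Matrix.fromRows 0 (Matrix.fromRows (Gam n ρ) 0))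
    (blk3 0 0 0
      (Matrix.diagonal u) (Matrix.diagonal v) 0
      0 (Wm n w f) (Matrix.diagonal v))

/-- The 4n×4n symmetrizer `S^a(v,γ)`, with block rows
`[[ΔΓ + W², ΔV_x, ΔV_y, −WH],[ΔV_x, ΔH, 0, 0],[ΔV_y, 0, ΔH, 0],[−WH, 0, 0, H²]]`. -/
noncomputable def Sa (n : ℕ) (ρ : Fin n → ℝ) (h u v w : Fin n → ℝ) (f : ℝ) :
    Matrix (Fin n ⊕ (Fin n ⊕ Fin n ⊕ Fin n)) (Fin n ⊕ (Fin n ⊕ Fin n ⊕ Fin n)) ℝ :=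
  Matrix.fromBlocks (Delta n ρ * Gam n ρ + Wm n w f ^ 2)
    (Matrix.fromCols (Delta n ρ * Matrix.diagonal u)
      (Matrix.fromCols (Delta n ρ * Matrix.diagonal v)
        (-(Wm n w f * Matrix.diagonal h))))
    (Matrix.fromRows (Delta n ρ * Matrix.diagonal u)
      (Matrix.fromRows (Delta n ρ * Matrix.diagonal v)
        (-(Wm n w f * Matrix.diagonal h))))
    (blk3 (Delta n ρ * Matrix.diagonal h) 0 0
      0 (Delta n ρ * Matrix.diagonal h) 0
      0 0 (Matrix.diagonal h ^ 2))

section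

variable {n : ℕ} {ρ : Fin n → ℝ}

lemma alphaN_eq_div (hρ : ∀ i, ρ i ≠ 0) (i : Fin n) :
    alphaN n ρ i = ρ i / ρ ⟨n - 1, Nat.sub_one_lt_of_lt i.isLt⟩ := by
  rw [alphaN, dif_pos (Nat.sub_one_lt_of_lt i.isLt), alpha]
  split_ifs with hi
  · rfl
  · have hlast : i = ⟨n - 1, Nat.sub_one_lt_of_lt i.isLt⟩ := by
      change ¬(i : ℕ) < n - 1 at hi
      exact Fin.ext (show (i : ℕ) = n - 1 by omega)
    rw [← hlast, div_self (hρ i)]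

lemma alphaN_mul_alpha (hρ : ∀ i, ρ i ≠ 0) (i j : Fin n) :
    alphaN n ρ i * alpha n ρ i j = alphaN n ρ (min i j) := by
  rw [alpha]
  split_ifs with hji
  · rw [min_eq_right hji.le, alphaN_eq_div hρ, alphaN_eq_div hρ]
    field_simp [hρ]
  · rw [min_eq_left (not_lt.mp hji), mul_one]

lemma isSymm_Delta_mul_Gam (hρ : ∀ i, ρ i ≠ 0) : (Delta n ρ * Gam n ρ).IsSymm := by
  ext i j
  simp only [transpose_apply, Delta, Gam, diagonal_mul, of_apply, alphaN_mul_alpha hρ, min_comm]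

lemma Delta_mul_diagonal_mul_Gam (d : Fin n → ℝ) :
    Delta n ρ * diagonal d * Gam n ρ = diagonal d * (Delta n ρ * Gam n ρ) := by
  rw [Delta, (commute_diagonal _ _).eq, Matrix.mul_assoc]

variable {h u v w : Fin n → ℝ} {f : ℝ}

lemma isSymm_Sa (hK : (Delta n ρ * Gam n ρ).IsSymm) : (Sa n ρ h u v w f).IsSymm := by
  simp only [Sa, blk3]
  generalize Delta n ρ * Gam n ρ = K at hK ⊢
  ext (i | i | i | i) (j | j | j | j) <;> by_cases hij : i = j <;>
    simp only [transpose_apply, fromBlocks_apply₁₁, fromBlocks_apply₁₂, fromBlocks_apply₂₁,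
      fromBlocks_apply₂₂, fromCols_apply_inl, fromCols_apply_inr, fromRows_apply_inl,
      fromRows_apply_inr, Matrix.add_apply, Matrix.zero_apply, Matrix.neg_apply, Delta, Wm, sq,
      diagonal_mul_diagonal, hK.apply, hij, diagonal_apply_eq,
      diagonal_apply_ne, diagonal_apply_ne', ne_eq, not_false_eq_true]

lemma isSymm_Sa_mul_Aax (hK : (Delta n ρ * Gam n ρ).IsSymm) :
    (Sa n ρ h u v w f * Aax n ρ h u v w f).IsSymm := by
  simp only [Sa, Aax, blk3, fromBlocks_multiply, fromCols_mul_fromRows, fromRows_mul,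
    mul_fromCols, fromCols_mul_fromBlocks, fromBlocks_mul_fromRows, Delta_mul_diagonal_mul_Gam]
  generalize Delta n ρ * Gam n ρ = K at hK ⊢
  ext (i | i | i | i) (j | j | j | j) <;> by_cases hij : i = j <;>
    simp only [transpose_apply, fromBlocks_apply₁₁, fromBlocks_apply₁₂, fromBlocks_apply₂₁,
      fromBlocks_apply₂₂, fromCols_apply_inl, fromCols_apply_inr, fromRows_apply_inl,
      fromRows_apply_inr, Matrix.add_apply, Matrix.zero_apply, Matrix.neg_apply, Matrix.mul_zero,
      Matrix.zero_mul, Matrix.neg_mul, Delta, Wm, sq, diagonal_mul, mul_diagonal,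
      diagonal_mul_diagonal, hK.apply, hij, diagonal_apply_eq, diagonal_apply_ne,
      diagonal_apply_ne', ne_eq, not_false_eq_true] <;> ring

lemma isSymm_Sa_mul_Aay (hK : (Delta n ρ * Gam n ρ).IsSymm) :
    (Sa n ρ h u v w f * Aay n ρ h u v w f).IsSymm := by
  simp only [Sa, Aay, blk3, fromBlocks_multiply, fromCols_mul_fromRows, fromRows_mul,
    mul_fromCols, fromCols_mul_fromBlocks, fromBlocks_mul_fromRows, Delta_mul_diagonal_mul_Gam]
  generalize Delta n ρ * Gam n ρ = K at hK ⊢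
  ext (i | i | i | i) (j | j | j | j) <;> by_cases hij : i = j <;>
    simp only [transpose_apply, fromBlocks_apply₁₁, fromBlocks_apply₁₂, fromBlocks_apply₂₁,
      fromBlocks_apply₂₂, fromCols_apply_inl, fromCols_apply_inr, fromRows_apply_inl,
      fromRows_apply_inr, Matrix.add_apply, Matrix.zero_apply, Matrix.neg_apply, Matrix.mul_zero,
      Matrix.zero_mul, Matrix.neg_mul, Delta, Wm, sq, diagonal_mul, mul_diagonal,
      diagonal_mul_diagonal, hK.apply, hij, diagonal_apply_eq, diagonal_apply_ne,
      diagonal_apply_ne', ne_eq, not_false_eq_true] <;> ring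

end

theorem stmt17_general (n : ℕ) (ρ : Fin n → ℝ) (hρ : ∀ i, 0 < ρ i)
    (h u v w : Fin n → ℝ) (f : ℝ) :
    (Sa n ρ h u v w f).IsSymm ∧
    (Sa n ρ h u v w f * Aax n ρ h u v w f).IsSymm ∧
    (Sa n ρ h u v w f * Aay n ρ h u v w f).IsSymm := by
  have hK := isSymm_Delta_mul_Gam fun i => (hρ i).ne'
  exact ⟨isSymm_Sa hK, isSymm_Sa_mul_Aax hK, isSymm_Sa_mul_Aay hK⟩

/-- `S^a(v,γ)` is symmetric and `S^a·A^a_x`, `S^a·A^a_y` are symmetric. -/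
theorem stmt17 (n : ℕ) (hn : 2 ≤ n) (ρ : Fin n → ℝ) (hρ : ∀ i, 0 < ρ i)
    (h u v w : Fin n → ℝ) (f : ℝ) :
    (Sa n ρ h u v w f).IsSymm ∧
    (Sa n ρ h u v w f * Aax n ρ h u v w f).IsSymm ∧
    (Sa n ρ h u v w f * Aay n ρ h u v w f).IsSymm :=
  stmt17_general n ρ hρ h u v w f

end MLSW17
end
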